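/- In a finite-horizon MDP with horizon H and rewards bounded in [0, 1], for any two policies π and ξ, |V(ξ) − V(π)| ≤ H · E_{t ~ Uniform(1..H), s ~ d_t^ξ}[ TV(ξ(·|s), π(·|s)) ] · H, i.e., the value difference is at most H² times the expected total-variation distance between the policies under the expert's state visitation distribution. -/

import Mathlib

open Finset

noncomputable def stateDist {S A : Type*} [Fintype S] [Fintype A]
    (ρ : S → ℝ) (P : S → A → S → ℝ) (π : ℕ → S → A → ℝ) : ℕ → S → ℝ
  | 0 => ρ
  | (t + 1) => fun s' => ∑ s, ∑ a, stateDist ρ P π t s * π t s a * P s a s'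

noncomputable def mdpValue {S A : Type*} [Fintype S] [Fintype A]
    (ρ : S → ℝ) (P : S → A → S → ℝ) (π : ℕ → S → A → ℝ)
    (r : ℕ → S → A → ℝ) (H : ℕ) : ℝ :=
  ∑ t ∈ Finset.range H, ∑ s, ∑ a, stateDist ρ P π t s * π t s a * r t s a

lemma stateDist_nonneg {S A : Type*} [Fintype S] [Fintype A]
    (ρ : S → ℝ) (hρ0 : ∀ s, 0 ≤ ρ s)
    (P : S → A → S → ℝ) (hP0 : ∀ s a s', 0 ≤ P s a s')
    (π : ℕ → S → A → ℝ) (hπ0 : ∀ t s a, 0 ≤ π t s a) :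
    ∀ t s, 0 ≤ stateDist ρ P π t s := by
  intro t
  induction t with
  | zero => exact hρ0
  | succ t ih =>
    intro s'
    apply Finset.sum_nonneg; intro s _
    apply Finset.sum_nonneg; intro a _
    exact mul_nonneg (mul_nonneg (ih s) (hπ0 t s a)) (hP0 s a s')

lemma stateDist_sum_eq_one {S A : Type*} [Fintype S] [Fintype A]
    (ρ : S → ℝ) (hρ1 : (∑ s, ρ s) = 1)
    (P : S → A → S → ℝ) (hP1 : ∀ s a, (∑ s', P s a s') = 1)
    (π : ℕ → S → A → ℝ) (hπ1 : ∀ t s, (∑ a, π t s a) = 1) :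
    ∀ t, (∑ s, stateDist ρ P π t s) = 1 := by
  intro t
  induction t with
  | zero => exact hρ1
  | succ t ih =>
    have h1 : ∑ s', stateDist ρ P π (t+1) s'
        = ∑ s', ∑ s, ∑ a, stateDist ρ P π t s * π t s a * P s a s' := rfl
    rw [h1, Finset.sum_comm]
    have : ∀ s, ∑ s', ∑ a, stateDist ρ P π t s * π t s a * P s a s'
        = stateDist ρ P π t s := by
      intro s
      rw [Finset.sum_comm]
      calc ∑ a, ∑ s', stateDist ρ P π t s * π t s a * P s a s'
          = ∑ a, stateDist ρ P π t s * π t s a * ∑ s', P s a s' := by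
            congr 1; ext a; rw [← Finset.mul_sum]
        _ = ∑ a, stateDist ρ P π t s * π t s a := by simp [hP1]
        _ = stateDist ρ P π t s := by rw [← Finset.mul_sum, hπ1, mul_one]
    simp_rw [this]
    exact ih

/-- In a finite-horizon MDP with horizon `H` and rewards in
`[0,1]`, for any two policies `ξ` and `π`,
`|V(ξ) − V(π)| ≤ H² · E_{t~Unif(1..H), s~d_t^ξ}[TV(ξ(·|s), π(·|s))]`. -/
theorem stmt_7 {S A : Type*} [Fintype S] [Fintype A]
    (ρ : S → ℝ) (hρ0 : ∀ s, 0 ≤ ρ s) (hρ1 : (∑ s, ρ s) = 1)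
    (P : S → A → S → ℝ) (hP0 : ∀ s a s', 0 ≤ P s a s')
    (hP1 : ∀ s a, (∑ s', P s a s') = 1)
    (r : ℕ → S → A → ℝ) (hr : ∀ t s a, r t s a ∈ Set.Icc (0:ℝ) 1)
    (ξ π : ℕ → S → A → ℝ)
    (hξ0 : ∀ t s a, 0 ≤ ξ t s a) (hξ1 : ∀ t s, (∑ a, ξ t s a) = 1)
    (hπ0 : ∀ t s a, 0 ≤ π t s a) (hπ1 : ∀ t s, (∑ a, π t s a) = 1)
    (H : ℕ) :
    |mdpValue ρ P ξ r H - mdpValue ρ P π r H| ≤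
      (H : ℝ) ^ 2 * ((1 / (H : ℝ)) * ∑ t ∈ Finset.range H, ∑ s,
        stateDist ρ P ξ t s * ((1 / 2) * ∑ a, |ξ t s a - π t s a|)) := by
  rcases Nat.eq_zero_or_pos H with hH | hH
  · subst hH; simp [mdpValue]
  set d := stateDist ρ P ξ with hd
  set e := stateDist ρ P π with he
  have hd0 : ∀ t s, 0 ≤ d t s := stateDist_nonneg ρ hρ0 P hP0 ξ hξ0
  have he0 : ∀ t s, 0 ≤ e t s := stateDist_nonneg ρ hρ0 P hP0 π hπ0
  have hd1 : ∀ t, (∑ s, d t s) = 1 := stateDist_sum_eq_one ρ hρ1 P hP1 ξ hξ1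
  have he1 : ∀ t, (∑ s, e t s) = 1 := stateDist_sum_eq_one ρ hρ1 P hP1 π hπ1
  set ε : ℕ → ℝ := fun t => ∑ s, d t s * ∑ a, |ξ t s a - π t s a| with hε
  set D : ℕ → ℝ := fun t => ∑ s, ∑ a, |d t s * ξ t s a - e t s * π t s a| with hDdef
  set Δ : ℕ → ℝ := fun t => ∑ s, |d t s - e t s| with hΔdef
  have hεnn : ∀ t, 0 ≤ ε t := by
    intro t
    apply Finset.sum_nonneg; intro s _
    exact mul_nonneg (hd0 t s) (Finset.sum_nonneg fun a _ => abs_nonneg _)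
  -- D t ≤ ε t + Δ t
  have hDε : ∀ t, D t ≤ ε t + Δ t := by
    intro t
    have key : ∀ s, ∑ a, |d t s * ξ t s a - e t s * π t s a|
        ≤ d t s * ∑ a, |ξ t s a - π t s a| + |d t s - e t s| := by
      intro s
      calc ∑ a, |d t s * ξ t s a - e t s * π t s a|
          ≤ ∑ a, (d t s * |ξ t s a - π t s a| + |d t s - e t s| * π t s a) := by
            apply Finset.sum_le_sum; intro a _
            have heq : d t s * ξ t s a - e t s * π t s a
                = d t s * (ξ t s a - π t s a) + (d t s - e t s) * π t s a := by ring
            rw [heq]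
            refine (abs_add_le _ _).trans ?_
            rw [abs_mul, abs_mul, abs_of_nonneg (hd0 t s), abs_of_nonneg (hπ0 t s a)]
        _ = d t s * ∑ a, |ξ t s a - π t s a| + |d t s - e t s| := by
            rw [Finset.sum_add_distrib, ← Finset.mul_sum, ← Finset.mul_sum, hπ1, mul_one]
    calc D t ≤ ∑ s, (d t s * ∑ a, |ξ t s a - π t s a| + |d t s - e t s|) :=
          Finset.sum_le_sum fun s _ => key s
      _ = ε t + Δ t := by rw [Finset.sum_add_distrib]
  -- Δ (t+1) ≤ D t
  have hΔsucc : ∀ t, Δ (t+1) ≤ D t := by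
    intro t
    have hexp : ∀ s', d (t+1) s' - e (t+1) s'
        = ∑ s, ∑ a, (d t s * ξ t s a - e t s * π t s a) * P s a s' := by
      intro s'
      have hdx : d (t+1) s' = ∑ s, ∑ a, d t s * ξ t s a * P s a s' := rfl
      have hex : e (t+1) s' = ∑ s, ∑ a, e t s * π t s a * P s a s' := rfl
      rw [hdx, hex, ← Finset.sum_sub_distrib]
      congr 1; ext s
      rw [← Finset.sum_sub_distrib]
      congr 1; ext a
      ring
    calc Δ (t+1) = ∑ s', |∑ s, ∑ a, (d t s * ξ t s a - e t s * π t s a) * P s a s'| := by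
          simp only [hΔdef]
          exact Finset.sum_congr rfl fun s' _ => by rw [hexp]
      _ ≤ ∑ s', ∑ s, ∑ a, |d t s * ξ t s a - e t s * π t s a| * P s a s' := by
          apply Finset.sum_le_sum; intro s' _
          refine (Finset.abs_sum_le_sum_abs _ _).trans ?_
          apply Finset.sum_le_sum; intro s _
          refine (Finset.abs_sum_le_sum_abs _ _).trans ?_
          apply Finset.sum_le_sum; intro a _
          rw [abs_mul, abs_of_nonneg (hP0 s a s')]
      _ = ∑ s, ∑ a, |d t s * ξ t s a - e t s * π t s a| * ∑ s', P s a s' := by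
          rw [Finset.sum_comm]
          congr 1; ext s
          rw [Finset.sum_comm]
          congr 1; ext a
          rw [← Finset.mul_sum]
      _ = D t := by
          simp only [hDdef]
          exact Finset.sum_congr rfl fun s _ => Finset.sum_congr rfl fun a _ => by
            rw [hP1, mul_one]
  -- Δ t ≤ ∑_{u<t} ε u
  have hΔbound : ∀ t, Δ t ≤ ∑ u ∈ Finset.range t, ε u := by
    intro t
    induction t with
    | zero => simp [hΔdef, hd, he, stateDist]
    | succ t ih =>
      calc Δ (t+1) ≤ D t := hΔsucc t
        _ ≤ ε t + Δ t := hDε t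
        _ ≤ ε t + ∑ u ∈ Finset.range t, ε u := by linarith
        _ = ∑ u ∈ Finset.range (t+1), ε u := by rw [Finset.sum_range_succ]; ring
  -- per-step value gap ≤ (1/2) D t
  have hstep : ∀ t, |(∑ s, ∑ a, d t s * ξ t s a * r t s a)
      - ∑ s, ∑ a, e t s * π t s a * r t s a| ≤ (1/2) * D t := by
    intro t
    have hm1 : (∑ s, ∑ a, d t s * ξ t s a) = 1 := by
      calc (∑ s, ∑ a, d t s * ξ t s a) = ∑ s, d t s * ∑ a, ξ t s a := by
            congr 1; ext s; rw [← Finset.mul_sum]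
        _ = ∑ s, d t s := by simp [hξ1]
        _ = 1 := hd1 t
    have hm2 : (∑ s, ∑ a, e t s * π t s a) = 1 := by
      calc (∑ s, ∑ a, e t s * π t s a) = ∑ s, e t s * ∑ a, π t s a := by
            congr 1; ext s; rw [← Finset.mul_sum]
        _ = ∑ s, e t s := by simp [hπ1]
        _ = 1 := he1 t
    have e1 : ∑ s, ∑ a, (d t s * ξ t s a - e t s * π t s a) * (r t s a - 1/2)
        = (∑ s, ∑ a, d t s * ξ t s a * r t s a)
          - (∑ s, ∑ a, e t s * π t s a * r t s a)
          - (1/2) * ((∑ s, ∑ a, d t s * ξ t s a) - (∑ s, ∑ a, e t s * π t s a)) := by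
      simp only [Finset.mul_sum, ← Finset.sum_sub_distrib]
      exact Finset.sum_congr rfl fun s _ => Finset.sum_congr rfl fun a _ => by ring
    have hrw : (∑ s, ∑ a, d t s * ξ t s a * r t s a)
        - (∑ s, ∑ a, e t s * π t s a * r t s a)
        = ∑ s, ∑ a, (d t s * ξ t s a - e t s * π t s a) * (r t s a - 1/2) := by
      rw [e1, hm1, hm2]; ring
    rw [hrw]
    calc |∑ s, ∑ a, (d t s * ξ t s a - e t s * π t s a) * (r t s a - 1/2)|
        ≤ ∑ s, ∑ a, |(d t s * ξ t s a - e t s * π t s a) * (r t s a - 1/2)| := by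
          refine (Finset.abs_sum_le_sum_abs _ _).trans ?_
          exact Finset.sum_le_sum fun s _ => Finset.abs_sum_le_sum_abs _ _
      _ ≤ ∑ s, ∑ a, |d t s * ξ t s a - e t s * π t s a| * (1/2) := by
          apply Finset.sum_le_sum; intro s _
          apply Finset.sum_le_sum; intro a _
          rw [abs_mul]
          apply mul_le_mul_of_nonneg_left _ (abs_nonneg _)
          obtain ⟨h1, h2⟩ := hr t s a
          rw [abs_le]; constructor <;> [linarith; linarith]
      _ = (1/2) * D t := by
          simp only [hDdef, Finset.mul_sum]
          exact Finset.sum_congr rfl fun s _ => Finset.sum_congr rfl fun a _ => by ring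
  -- assemble
  have hDbound : ∀ t ∈ Finset.range H, D t ≤ ∑ u ∈ Finset.range H, ε u := by
    intro t ht
    calc D t ≤ ε t + Δ t := hDε t
      _ ≤ ε t + ∑ u ∈ Finset.range t, ε u := by linarith [hΔbound t]
      _ = ∑ u ∈ Finset.range (t+1), ε u := by rw [Finset.sum_range_succ]; ring
      _ ≤ ∑ u ∈ Finset.range H, ε u := by
          apply Finset.sum_le_sum_of_subset_of_nonneg
          · exact Finset.range_subset_range.mpr (Nat.succ_le_of_lt (Finset.mem_range.mp ht))
          · exact fun u _ _ => hεnn u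
  have hVal : mdpValue ρ P ξ r H - mdpValue ρ P π r H
      = ∑ t ∈ Finset.range H, ((∑ s, ∑ a, d t s * ξ t s a * r t s a)
          - ∑ s, ∑ a, e t s * π t s a * r t s a) := by
    simp only [mdpValue, ← hd, ← he, Finset.sum_sub_distrib]
  have hmain : |mdpValue ρ P ξ r H - mdpValue ρ P π r H|
      ≤ (H : ℝ) * ((1/2) * ∑ u ∈ Finset.range H, ε u) := by
    rw [hVal]
    calc |∑ t ∈ Finset.range H, ((∑ s, ∑ a, d t s * ξ t s a * r t s a)
            - ∑ s, ∑ a, e t s * π t s a * r t s a)|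
        ≤ ∑ t ∈ Finset.range H, |(∑ s, ∑ a, d t s * ξ t s a * r t s a)
            - ∑ s, ∑ a, e t s * π t s a * r t s a| := Finset.abs_sum_le_sum_abs _ _
      _ ≤ ∑ t ∈ Finset.range H, (1/2) * D t := Finset.sum_le_sum fun t _ => hstep t
      _ ≤ ∑ t ∈ Finset.range H, (1/2) * ∑ u ∈ Finset.range H, ε u := by
          apply Finset.sum_le_sum; intro t ht
          have := hDbound t ht; linarith
      _ = (H : ℝ) * ((1/2) * ∑ u ∈ Finset.range H, ε u) := by
          rw [Finset.sum_const, Finset.card_range, nsmul_eq_mul]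
  have hR : (∑ t ∈ Finset.range H, ∑ s, d t s * ((1/2) * ∑ a, |ξ t s a - π t s a|))
      = (1/2) * ∑ u ∈ Finset.range H, ε u := by
    rw [Finset.mul_sum]
    refine Finset.sum_congr rfl fun t _ => ?_
    simp only [hε, Finset.mul_sum]
    exact Finset.sum_congr rfl fun s _ => Finset.sum_congr rfl fun a _ => by ring
  have hHne : (H : ℝ) ≠ 0 := Nat.cast_ne_zero.mpr hH.ne'
  rw [hR]
  calc |mdpValue ρ P ξ r H - mdpValue ρ P π r H|
      ≤ (H : ℝ) * ((1/2) * ∑ u ∈ Finset.range H, ε u) := hmain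
    _ = (H : ℝ) ^ 2 * (1 / (H : ℝ) * ((1/2) * ∑ u ∈ Finset.range H, ε u)) := by
        field_simp
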